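/- arXiv:2407.04306 — 5 statements merged into one kernel-verified Lean document; each statement's English description precedes it below -/
import Mathlib

section
/- Let (u_j^n) for j=0..N, n≥0 be real sequences satisfying the interior finite-difference wave scheme (u_j^{n+1}-2u_j^n+u_j^{n-1})/Δt² - (u_{j+1}^n-2u_j^n+u_{j-1}^n)/Δx² = 0 for 1≤j≤N-1, the Dirichlet condition u_0^n=0, and the discrete Neumann condition (u_N^{n+1}-2u_N^n+u_N^{n-1})/Δt² - 2(u_{N-1}^n-u_N^n)/Δx² = 0. Define the discrete energy E^n = (1/2)Σ_{j=0}^{N-1}((u_j^{n+1}-u_j^n)/Δt)² + (1/4)((u_N^{n+1}-u_N^n)/Δt)² + (1/2)Σ_{j=0}^{N-1}((u_{j+1}^n-u_j^n)/Δx)((u_{j+1}^{n+1}-u_j^{n+1})/Δx). Then E^{n+1} = E^n for all n≥1. -/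
open Finset

lemma sbp (f g : ℕ → ℝ) (hg : g 0 = 0) :
    ∀ N : ℕ, 1 ≤ N → ∑ j ∈ range N, (f (j+1) - f j) * (g (j+1) - g j)
      = g N * (f N - f (N-1)) - ∑ j ∈ Ico 1 N, g j * (f (j+1) - 2*f j + f (j-1)) := by
  intro N hN
  induction N, hN using Nat.le_induction with
  | base => simp [hg]; ring
  | succ N hN ih =>
    rw [Finset.sum_range_succ, ih, Finset.sum_Ico_succ_top (by omega)]
    have h1 : N + 1 - 1 = N := rfl
    rw [h1]
    ring

lemma key (N : ℕ) (hN : 1 ≤ N) (Δt Δx : ℝ) (hΔt : 0 < Δt) (hΔx : 0 < Δx)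
    (a b d : ℕ → ℝ) (ha0 : a 0 = 0) (hb0 : b 0 = 0) (hd0 : d 0 = 0)
    (h1 : ∀ j, 1 ≤ j → j ≤ N-1 →
      Δx^2 * (d j - 2*a j + b j) = Δt^2 * (a (j+1) - 2*a j + a (j-1)))
    (h2 : Δx^2 * (d N - 2*a N + b N) = Δt^2 * (2*(a (N-1) - a N))) :
    (1/2) * ∑ j ∈ range N, ((d j - a j)/Δt)^2 + (1/4) * ((d N - a N)/Δt)^2
      + (1/2) * ∑ j ∈ range N, ((a (j+1) - a j)/Δx) * ((d (j+1) - d j)/Δx)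
    = (1/2) * ∑ j ∈ range N, ((a j - b j)/Δt)^2 + (1/4) * ((a N - b N)/Δt)^2
      + (1/2) * ∑ j ∈ range N, ((b (j+1) - b j)/Δx) * ((a (j+1) - a j)/Δx) := by
  have ht : Δt^2 ≠ 0 := by positivity
  have hx : Δx^2 ≠ 0 := by positivity
  set S : ℝ := ∑ j ∈ Ico 1 N, (d j - b j) * (a (j+1) - 2*a j + a (j-1)) with hS
  -- kinetic interior
  have hT1 : Δx^2 * (∑ j ∈ range N, (d j - a j)^2) - Δx^2 * (∑ j ∈ range N, (a j - b j)^2)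
      = Δt^2 * S := by
    have : Δx^2 * (∑ j ∈ range N, (d j - a j)^2) - Δx^2 * (∑ j ∈ range N, (a j - b j)^2)
        = ∑ j ∈ Ico 0 N, (Δx^2 * ((d j - a j)^2 - (a j - b j)^2)) := by
      rw [← range_eq_Ico, ← Finset.mul_sum, Finset.sum_sub_distrib, mul_sub]
    rw [this, Finset.sum_eq_sum_Ico_succ_bot (by omega), ha0, hb0, hd0, hS,
      Finset.mul_sum]
    simp only [sub_zero, sub_self]
    rw [mul_zero, zero_add]
    apply Finset.sum_congr rfl
    intro j hj
    obtain ⟨hj1, hj2⟩ := Finset.mem_Ico.mp hj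
    linear_combination (d j - b j) * h1 j hj1 (by omega)
  -- kinetic boundary
  have hT2 : Δx^2 * ((d N - a N)^2 - (a N - b N)^2)
      = Δt^2 * (2 * (d N - b N) * (a (N-1) - a N)) := by
    linear_combination (d N - b N) * h2
  -- potential via summation by parts
  have hT3 : ∑ j ∈ range N, (a (j+1) - a j) * (d (j+1) - d j)
        - ∑ j ∈ range N, (b (j+1) - b j) * (a (j+1) - a j)
      = (d N - b N) * (a N - a (N-1)) - S := by
    have hg0 : (fun j => d j - b j) 0 = 0 := by simp [hd0, hb0]
    have h := sbp a (fun j => d j - b j) hg0 N hN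
    rw [hS]
    rw [show ∑ j ∈ range N, (a (j+1) - a j) * (d (j+1) - d j)
          - ∑ j ∈ range N, (b (j+1) - b j) * (a (j+1) - a j)
        = ∑ j ∈ range N, (a (j+1) - a j) * ((d (j+1) - b (j+1)) - (d j - b j)) by
      rw [← Finset.sum_sub_distrib]; apply Finset.sum_congr rfl; intro j _; ring]
    rw [h]
  -- assemble
  have e1 : ∀ v w : ℕ → ℝ, ∑ j ∈ range N, ((v j - w j)/Δt)^2
      = (∑ j ∈ range N, (v j - w j)^2) / Δt^2 := by
    intro v w
    rw [Finset.sum_div]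
    apply Finset.sum_congr rfl
    intro j _
    rw [div_pow]
  have e2 : ∀ v w : ℕ → ℝ, ∑ j ∈ range N, ((v (j+1) - v j)/Δx) * ((w (j+1) - w j)/Δx)
      = (∑ j ∈ range N, (v (j+1) - v j) * (w (j+1) - w j)) / Δx^2 := by
    intro v w
    rw [Finset.sum_div]
    apply Finset.sum_congr rfl
    intro j _
    rw [div_mul_div_comm, sq]
  rw [e1 d a, e1 a b, e2 a d, e2 b a]
  field_simp
  linear_combination 4 * hT1 + 2 * hT2 + (4*Δt^2) * hT3

/-- Discrete energy conservation for the finite-difference wave scheme with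
Dirichlet condition at `j = 0` and (ghost-cell) Neumann condition at `j = N`. -/
theorem stmt_0 (N : ℕ) (hN : 1 ≤ N) (Δt Δx : ℝ) (hΔt : 0 < Δt) (hΔx : 0 < Δx)
    (u : ℕ → ℕ → ℝ)
    (hscheme : ∀ n : ℕ, 1 ≤ n → ∀ j : ℕ, 1 ≤ j → j ≤ N - 1 →
      (u j (n+1) - 2 * u j n + u j (n-1)) / Δt^2
        - (u (j+1) n - 2 * u j n + u (j-1) n) / Δx^2 = 0)
    (hDir : ∀ n : ℕ, u 0 n = 0)
    (hNeu : ∀ n : ℕ, 1 ≤ n →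
      (u N (n+1) - 2 * u N n + u N (n-1)) / Δt^2
        - 2 * (u (N-1) n - u N n) / Δx^2 = 0)
    (E : ℕ → ℝ)
    (hE : ∀ n : ℕ, E n =
      (1/2) * ∑ j ∈ Finset.range N, ((u j (n+1) - u j n) / Δt)^2
      + (1/4) * ((u N (n+1) - u N n) / Δt)^2
      + (1/2) * ∑ j ∈ Finset.range N,
          ((u (j+1) n - u j n) / Δx) * ((u (j+1) (n+1) - u j (n+1)) / Δx)) :
    ∀ n : ℕ, 1 ≤ n → E (n+1) = E n := by
  intro n hn
  have ht : Δt^2 ≠ 0 := by positivity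
  have hx : Δx^2 ≠ 0 := by positivity
  have h1 : ∀ j, 1 ≤ j → j ≤ N-1 →
      Δx^2 * (u j (n+2) - 2 * u j (n+1) + u j n)
        = Δt^2 * (u (j+1) (n+1) - 2 * u j (n+1) + u (j-1) (n+1)) := by
    intro j hj1 hj2
    have h := hscheme (n+1) (by omega) j hj1 hj2
    simp only [Nat.add_sub_cancel] at h
    field_simp at h
    linear_combination h
  have h2 : Δx^2 * (u N (n+2) - 2 * u N (n+1) + u N n)
      = Δt^2 * (2 * (u (N-1) (n+1) - u N (n+1))) := by
    have h := hNeu (n+1) (by omega)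
    simp only [Nat.add_sub_cancel] at h
    field_simp at h
    linear_combination h
  rw [hE (n+1), hE n]
  exact key N hN Δt Δx hΔt hΔx (fun j => u j (n+1)) (fun j => u j n) (fun j => u j (n+2))
    (hDir (n+1)) (hDir n) (hDir (n+2)) h1 h2
end

section
/- Let (u_j^n) for j=0..N, n≥0 be real sequences satisfying the interior finite-difference wave scheme (u_j^{n+1}-2u_j^n+u_j^{n-1})/Δt² - (u_{j+1}^n-2u_j^n+u_{j-1}^n)/Δx² = 0 for 1≤j≤N-1, with homogeneous Dirichlet conditions u_0^n = u_N^n = 0. Define E^n = (1/2)Σ_{j=1}^{N-1}((u_j^{n+1}-u_j^n)/Δt)² + (1/2)Σ_{j=0}^{N-1}((u_{j+1}^n-u_j^n)/Δx)((u_{j+1}^{n+1}-u_j^{n+1})/Δx). Then E^{n+1} = E^n for all n≥1. -/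
open Finset

/-- Abel summation-by-parts identity. -/
lemma abel_sbp (d v : ℕ → ℝ) :
    ∀ N : ℕ, 1 ≤ N →
      ∑ j ∈ Finset.range N, (d (j+1) - d j) * (v (j+1) - v j)
        + ∑ j ∈ Finset.Icc 1 (N-1), d j * (v (j+1) - 2 * v j + v (j-1))
      = d N * (v N - v (N-1)) - d 0 * (v 1 - v 0) := by
  intro N
  induction N with
  | zero => omega
  | succ m ih =>
    intro _
    rcases Nat.eq_zero_or_pos m with hm | hm
    · subst hm
      simp [Finset.sum_range_succ]
      ring
    · obtain ⟨k, rfl⟩ : ∃ k, m = k + 1 := ⟨m - 1, by omega⟩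
      have h1 : (1:ℕ) ≤ k + 1 := by omega
      have hIcc : Finset.Icc 1 (k + 1 + 1 - 1) = Finset.Icc 1 (k + 1) := by norm_num
      rw [Finset.sum_range_succ, hIcc, Finset.sum_Icc_succ_top h1]
      have ih' := ih h1
      simp only [Nat.add_sub_cancel] at ih'
      have : (k+1+1-1) = k+1 := by omega
      rw [this]
      simp only [Nat.add_sub_cancel]
      linear_combination ih'

/-- Discrete energy conservation for the finite-difference wave scheme with
homogeneous Dirichlet conditions at both ends. -/
theorem stmt_1 (N : ℕ) (hN : 2 ≤ N) (Δt Δx : ℝ) (hΔt : 0 < Δt) (hΔx : 0 < Δx)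
    (u : ℕ → ℕ → ℝ)
    (hscheme : ∀ n : ℕ, 1 ≤ n → ∀ j : ℕ, 1 ≤ j → j ≤ N - 1 →
      (u j (n+1) - 2 * u j n + u j (n-1)) / Δt^2
        - (u (j+1) n - 2 * u j n + u (j-1) n) / Δx^2 = 0)
    (hDir0 : ∀ n : ℕ, u 0 n = 0)
    (hDirN : ∀ n : ℕ, u N n = 0)
    (E : ℕ → ℝ)
    (hE : ∀ n : ℕ, E n =
      (1/2) * ∑ j ∈ Finset.Icc 1 (N-1), ((u j (n+1) - u j n) / Δt)^2
      + (1/2) * ∑ j ∈ Finset.range N,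
          ((u (j+1) n - u j n) / Δx) * ((u (j+1) (n+1) - u j (n+1)) / Δx)) :
    ∀ n : ℕ, 1 ≤ n → E (n+1) = E n := by
  intro n hn
  have hΔt' : Δt ≠ 0 := ne_of_gt hΔt
  have hΔx' : Δx ≠ 0 := ne_of_gt hΔx
  set d : ℕ → ℝ := fun j => u j (n+1+1) - u j n with hd
  set v : ℕ → ℝ := fun j => u j (n+1) with hv
  -- kinetic part
  have key : ∀ j ∈ Finset.Icc 1 (N-1),
      ((u j (n+1+1) - u j (n+1))/Δt)^2 - ((u j (n+1) - u j n)/Δt)^2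
        = d j * (v (j+1) - 2 * v j + v (j-1)) / Δx^2 := by
    intro j hj
    rw [Finset.mem_Icc] at hj
    have hs := hscheme (n+1) (by omega) j hj.1 hj.2
    simp only [Nat.add_sub_cancel] at hs
    have hA : (u j (n+1+1) - 2 * u j (n+1) + u j n) / Δt^2
        = (u (j+1) (n+1) - 2 * u j (n+1) + u (j-1) (n+1)) / Δx^2 := by
      linarith [hs]
    have hlhs : ((u j (n+1+1) - u j (n+1))/Δt)^2 - ((u j (n+1) - u j n)/Δt)^2
        = (u j (n+1+1) - u j n) * ((u j (n+1+1) - 2 * u j (n+1) + u j n) / Δt^2) := by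
      field_simp
      ring
    rw [hlhs, hA, hd, hv]
    simp only
    ring
  have hK : (∑ j ∈ Finset.Icc 1 (N-1), ((u j (n+1+1) - u j (n+1))/Δt)^2)
      - ∑ j ∈ Finset.Icc 1 (N-1), ((u j (n+1) - u j n)/Δt)^2
      = (∑ j ∈ Finset.Icc 1 (N-1), d j * (v (j+1) - 2 * v j + v (j-1))) / Δx^2 := by
    rw [← Finset.sum_sub_distrib, Finset.sum_div]
    exact Finset.sum_congr rfl key
  -- potential part
  have hP : (∑ j ∈ Finset.range N,
        ((u (j+1) (n+1) - u j (n+1))/Δx) * ((u (j+1) (n+1+1) - u j (n+1+1))/Δx))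
      - ∑ j ∈ Finset.range N,
        ((u (j+1) n - u j n)/Δx) * ((u (j+1) (n+1) - u j (n+1))/Δx)
      = (∑ j ∈ Finset.range N, (d (j+1) - d j) * (v (j+1) - v j)) / Δx^2 := by
    rw [← Finset.sum_sub_distrib, Finset.sum_div]
    refine Finset.sum_congr rfl fun j _ => ?_
    simp only [hd, hv]
    field_simp
    ring
  have habel := abel_sbp d v N (by omega)
  have hd0 : d 0 = 0 := by simp [hd, hDir0]
  have hdN : d N = 0 := by simp [hd, hDirN]
  rw [hd0, hdN] at habel
  have hzero : (∑ j ∈ Finset.Icc 1 (N-1), d j * (v (j+1) - 2 * v j + v (j-1)))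
      + (∑ j ∈ Finset.range N, (d (j+1) - d j) * (v (j+1) - v j)) = 0 := by
    linarith [habel]
  have hdiv : (∑ j ∈ Finset.Icc 1 (N-1), d j * (v (j+1) - 2 * v j + v (j-1))) / Δx^2
      + (∑ j ∈ Finset.range N, (d (j+1) - d j) * (v (j+1) - v j)) / Δx^2 = 0 := by
    rw [← add_div, hzero, zero_div]
  rw [hE (n+1), hE n]
  linarith [hK, hP, hdiv]
end

section
/- Let U be a Hilbert space, T₀ > 0, c > 0, and let (z_n) ⊂ H¹(0,1;U), (λ_n) ⊂ ℂ with Re λ_n = c for all n, such that z_n(0) → 0 in U and h_n := λ_n z_n + T₀^{-1} ∂_ρ z_n → 0 in L²(0,1;U). Then z_n → 0 in L²(0,1;U). -/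
open MeasureTheory Filter

/-- If `z_n(0) → 0` in `U` and `h_n := λ_n z_n + T₀⁻¹ ∂_ρ z_n → 0` in
`L²(0,1;U)`, with `Re λ_n = c > 0`, then `z_n → 0` in `L²(0,1;U)`. -/
theorem stmt_9 {U : Type*} [NormedAddCommGroup U] [InnerProductSpace ℂ U]
    [CompleteSpace U]
    (T₀ c : ℝ) (hT₀ : 0 < T₀) (hc : 0 < c)
    (lam : ℕ → ℂ) (hlam : ∀ n, (lam n).re = c)
    (z : ℕ → ℝ → U) (d : ℕ → ℝ → U)
    (hcont : ∀ n, ContinuousOn (z n) (Set.Icc 0 1))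
    (hder : ∀ n, ∀ ρ ∈ Set.Ioo (0:ℝ) 1, HasDerivAt (z n) (d n ρ) ρ)
    (h : ℕ → ℝ → U)
    (hh : ∀ n ρ, h n ρ = lam n • z n ρ + ((T₀:ℂ))⁻¹ • d n ρ)
    (hint : ∀ n, IntervalIntegrable (fun ρ => ‖h n ρ‖^2) volume 0 1)
    (hz0 : Tendsto (fun n => z n 0) atTop (nhds 0))
    (hhto0 : Tendsto (fun n => ∫ ρ in (0:ℝ)..1, ‖h n ρ‖^2) atTop (nhds 0)) :
    Tendsto (fun n => ∫ ρ in (0:ℝ)..1, ‖z n ρ‖^2) atTop (nhds 0) := by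
  have hT₀' : (T₀ : ℂ) ≠ 0 := by exact_mod_cast hT₀.ne'
  -- d in terms of h and z
  have hd : ∀ n ρ, d n ρ = (T₀ : ℂ) • (h n ρ - lam n • z n ρ) := by
    intro n ρ
    rw [hh n ρ, add_sub_cancel_left, smul_smul, mul_inv_cancel₀ hT₀', one_smul]
  set gd : ℕ → ℝ → ℝ :=
    fun n ρ => 2 * T₀ * ((inner ℂ (z n ρ) (h n ρ) : ℂ).re - c * ‖z n ρ‖ ^ 2) with hgd
  -- derivative of ‖z‖²
  have key : ∀ n, ∀ ρ ∈ Set.Ioo (0:ℝ) 1,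
      HasDerivAt (fun t => ‖z n t‖ ^ 2) (gd n ρ) ρ := by
    intro n ρ hρ
    have h1 : HasDerivAt (fun t => (inner ℂ (z n t) (z n t) : ℂ))
        ((inner ℂ (z n ρ) (d n ρ) : ℂ) + (inner ℂ (d n ρ) (z n ρ) : ℂ)) ρ :=
      (hder n ρ hρ).inner ℂ (hder n ρ hρ)
    have h2 := (Complex.reCLM.hasFDerivAt).comp_hasDerivAt ρ h1
    have hfun : (fun t => Complex.reCLM ((inner ℂ (z n t) (z n t) : ℂ)))
        = fun t => ‖z n t‖ ^ 2 := by
      funext t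
      simpa using inner_self_eq_norm_sq (𝕜 := ℂ) (z n t)
    have hval : Complex.reCLM ((inner ℂ (z n ρ) (d n ρ) : ℂ) + (inner ℂ (d n ρ) (z n ρ) : ℂ))
        = gd n ρ := by
      have e1 : (inner ℂ (z n ρ) (d n ρ) : ℂ)
          = (T₀:ℂ) * ((inner ℂ (z n ρ) (h n ρ):ℂ) - lam n * (inner ℂ (z n ρ) (z n ρ):ℂ)) := by
        rw [hd n ρ, inner_smul_right, inner_sub_right, inner_smul_right]
      have e2 : (inner ℂ (z n ρ) (z n ρ) : ℂ).re = ‖z n ρ‖^2 := by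
        simpa using inner_self_eq_norm_sq (𝕜 := ℂ) (z n ρ)
      have e3 : (inner ℂ (z n ρ) (z n ρ) : ℂ).im = 0 := by
        exact inner_self_im (𝕜 := ℂ) (z n ρ)
      rw [hgd]
      simp only [ContinuousLinearMap.coe_coe, Complex.reCLM_apply, Complex.add_re,
        ← inner_conj_symm (d n ρ) (z n ρ), Complex.conj_re, e1, Complex.mul_re, Complex.mul_im,
        Complex.sub_re, Complex.sub_im, Complex.ofReal_re, Complex.ofReal_im, e2, e3, hlam n]
      ring
    rw [← hfun, ← hval]
    exact h2
  -- integrability of ‖z‖²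
  have hIz : ∀ n, IntervalIntegrable (fun ρ => ‖z n ρ‖^2) volume 0 1 := by
    intro n
    apply ContinuousOn.intervalIntegrable
    rw [Set.uIcc_of_le zero_le_one]
    exact (hcont n).norm.pow 2
  -- measurability of the inner product term
  have hmeas : ∀ n, AEStronglyMeasurable (fun ρ => ((inner ℂ (z n ρ) (h n ρ) : ℂ)).re)
      (volume.restrict (Set.Ioc (0:ℝ) 1)) := by
    intro n
    have hzm : AEStronglyMeasurable (z n) (volume.restrict (Set.Ioc (0:ℝ) 1)) :=
      ((hcont n).mono Set.Ioc_subset_Icc_self).aestronglyMeasurable measurableSet_Ioc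
    have hdm : AEStronglyMeasurable (fun ρ => deriv (z n) ρ)
        (volume.restrict (Set.Ioc (0:ℝ) 1)) :=
      (stronglyMeasurable_deriv (z n)).aestronglyMeasurable
    have hmem : ∀ᵐ ρ ∂(volume.restrict (Set.Ioc (0:ℝ) 1)), ρ ∈ Set.Ioo (0:ℝ) 1 := by
      rw [← MeasureTheory.Measure.restrict_congr_set MeasureTheory.Ioo_ae_eq_Ioc]
      exact ae_restrict_mem measurableSet_Ioo
    have hhe : h n =ᵐ[volume.restrict (Set.Ioc (0:ℝ) 1)]
        fun ρ => lam n • z n ρ + ((T₀:ℂ))⁻¹ • deriv (z n) ρ := by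
      filter_upwards [hmem] with ρ hρ
      rw [hh n ρ, (hder n ρ hρ).deriv]
    have hhm : AEStronglyMeasurable (h n) (volume.restrict (Set.Ioc (0:ℝ) 1)) :=
      ((hzm.const_smul (lam n)).add (hdm.const_smul (((T₀:ℂ))⁻¹))).congr hhe.symm
    exact Complex.continuous_re.comp_aestronglyMeasurable (hzm.inner hhm)
  -- integrability of the inner product term
  have hIinner : ∀ n, IntervalIntegrable
      (fun ρ => ((inner ℂ (z n ρ) (h n ρ) : ℂ)).re) volume 0 1 := by
    intro n
    rw [intervalIntegrable_iff_integrableOn_Ioc_of_le zero_le_one]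
    have hb : IntegrableOn (fun ρ => (‖z n ρ‖^2 + ‖h n ρ‖^2)/2) (Set.Ioc 0 1) volume := by
      rw [← intervalIntegrable_iff_integrableOn_Ioc_of_le zero_le_one]
      exact ((hIz n).add (hint n)).div_const 2
    refine hb.integrable.mono (hmeas n) (ae_of_all _ fun ρ => ?_)
    have h1 : |((inner ℂ (z n ρ) (h n ρ) : ℂ)).re| ≤ ‖z n ρ‖ * ‖h n ρ‖ := by
      have ha := Complex.abs_re_le_norm (inner ℂ (z n ρ) (h n ρ) : ℂ)
      exact ha.trans (norm_inner_le_norm _ _)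
    have h2 : (0:ℝ) ≤ (‖z n ρ‖^2 + ‖h n ρ‖^2)/2 := by positivity
    rw [Real.norm_eq_abs, Real.norm_eq_abs, abs_of_nonneg h2]
    nlinarith [sq_nonneg (‖z n ρ‖ - ‖h n ρ‖), h1]
  have hIgd : ∀ n, IntervalIntegrable (gd n) volume 0 1 := by
    intro n
    have := ((hIinner n).sub ((hIz n).const_mul c)).const_mul (2*T₀)
    simpa [hgd] using this
  -- FTC
  have hftc : ∀ n, ∫ ρ in (0:ℝ)..1, gd n ρ = ‖z n 1‖^2 - ‖z n 0‖^2 := by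
    intro n
    exact intervalIntegral.integral_eq_sub_of_hasDeriv_right_of_le zero_le_one
      ((hcont n).norm.pow 2) (fun ρ hρ => (key n ρ hρ).hasDerivWithinAt) (hIgd n)
  -- split the integral
  have hsplit : ∀ n, ∫ ρ in (0:ℝ)..1, gd n ρ
      = 2*T₀*((∫ ρ in (0:ℝ)..1, ((inner ℂ (z n ρ) (h n ρ) : ℂ)).re)
          - c * ∫ ρ in (0:ℝ)..1, ‖z n ρ‖^2) := by
    intro n
    rw [hgd]
    rw [intervalIntegral.integral_const_mul,
      intervalIntegral.integral_sub (hIinner n) ((hIz n).const_mul c),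
      intervalIntegral.integral_const_mul]
  -- bound on the inner product integral
  have hbound : ∀ n, (∫ ρ in (0:ℝ)..1, ((inner ℂ (z n ρ) (h n ρ) : ℂ)).re)
      ≤ (c/2) * (∫ ρ in (0:ℝ)..1, ‖z n ρ‖^2) + (1/(2*c)) * ∫ ρ in (0:ℝ)..1, ‖h n ρ‖^2 := by
    intro n
    have hpt : ∀ ρ ∈ Set.Icc (0:ℝ) 1, ((inner ℂ (z n ρ) (h n ρ) : ℂ)).re
        ≤ (c/2) * ‖z n ρ‖^2 + (1/(2*c)) * ‖h n ρ‖^2 := by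
      intro ρ _
      have h1 : ((inner ℂ (z n ρ) (h n ρ) : ℂ)).re ≤ ‖z n ρ‖ * ‖h n ρ‖ := by
        have ha := Complex.abs_re_le_norm (inner ℂ (z n ρ) (h n ρ) : ℂ)
        exact (le_abs_self _).trans (ha.trans (norm_inner_le_norm _ _))
      have h2 : ‖z n ρ‖ * ‖h n ρ‖ ≤ (c/2) * ‖z n ρ‖^2 + (1/(2*c)) * ‖h n ρ‖^2 := by
        have h3 : (0:ℝ) < 2*c := by linarith
        have h4 : (c/2) * ‖z n ρ‖^2 + (1/(2*c)) * ‖h n ρ‖^2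
            = (c^2*‖z n ρ‖^2 + ‖h n ρ‖^2)/(2*c) := by
          field_simp
        rw [h4, le_div_iff₀ h3]
        nlinarith [sq_nonneg (c*‖z n ρ‖ - ‖h n ρ‖)]
      linarith
    have := intervalIntegral.integral_mono_on zero_le_one (hIinner n)
      (((hIz n).const_mul (c/2)).add ((hint n).const_mul (1/(2*c)))) hpt
    calc (∫ ρ in (0:ℝ)..1, ((inner ℂ (z n ρ) (h n ρ) : ℂ)).re)
        ≤ ∫ ρ in (0:ℝ)..1, ((c/2) * ‖z n ρ‖^2 + (1/(2*c)) * ‖h n ρ‖^2) := this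
      _ = _ := by
          rw [intervalIntegral.integral_add ((hIz n).const_mul (c/2))
            ((hint n).const_mul (1/(2*c))), intervalIntegral.integral_const_mul,
            intervalIntegral.integral_const_mul]
  -- nonnegativity and upper bound
  have hA0 : ∀ n, 0 ≤ ∫ ρ in (0:ℝ)..1, ‖z n ρ‖^2 := fun n =>
    intervalIntegral.integral_nonneg zero_le_one (fun ρ _ => by positivity)
  have hH0 : ∀ n, 0 ≤ ∫ ρ in (0:ℝ)..1, ‖h n ρ‖^2 := fun n =>
    intervalIntegral.integral_nonneg zero_le_one (fun ρ _ => by positivity)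
  have hub : ∀ n, (∫ ρ in (0:ℝ)..1, ‖z n ρ‖^2)
      ≤ (‖z n 0‖^2 + (T₀/c) * ∫ ρ in (0:ℝ)..1, ‖h n ρ‖^2)/(T₀*c) := by
    intro n
    have h1 := hftc n
    rw [hsplit n] at h1
    have h2 := hbound n
    have h3 : (0:ℝ) ≤ ‖z n 1‖^2 := by positivity
    have hTc : 0 < T₀ * c := mul_pos hT₀ hc
    rw [le_div_iff₀ hTc]
    have h5 : 2*T₀*((c/2) * (∫ ρ in (0:ℝ)..1, ‖z n ρ‖^2)
          + (1/(2*c)) * ∫ ρ in (0:ℝ)..1, ‖h n ρ‖^2)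
        = T₀*c*(∫ ρ in (0:ℝ)..1, ‖z n ρ‖^2) + (T₀/c) * ∫ ρ in (0:ℝ)..1, ‖h n ρ‖^2 := by
      field_simp
    have h6 := mul_le_mul_of_nonneg_left h2 (by linarith : (0:ℝ) ≤ 2*T₀)
    rw [h5] at h6
    nlinarith [h1, h3, h6]
  -- squeeze
  have h1 : Tendsto (fun n => ‖z n 0‖^2) atTop (nhds 0) := by
    have := (hz0.norm).pow 2
    simpa using this
  have hubt : Tendsto (fun n => (‖z n 0‖^2
      + (T₀/c) * ∫ ρ in (0:ℝ)..1, ‖h n ρ‖^2)/(T₀*c)) atTop (nhds 0) := by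
    have := (h1.add (hhto0.const_mul (T₀/c))).div_const (T₀*c)
    simpa using this
  exact tendsto_of_tendsto_of_tendsto_of_le_of_le tendsto_const_nhds hubt hA0 hub
end

section
/- Let h_j = Δx for j=1..N, and for i=0..N define α_{i+1/2} by α_{1/2} = 2/Δx, α_{i+1/2} = 1/Δx for 1≤i≤N-1, and α_{N+1/2} = 0. Suppose (u_i^n), i=0..N+1, satisfies u_0^n = 0 and the finite-volume scheme h_i(u_i^{n+1}-2u_i^n+u_i^{n-1})/Δt² - [α_{i+1/2}(u_{i+1}^n - u_i^n) - α_{i-1/2}(u_i^n - u_{i-1}^n)] = 0 for i=1..N. Define E^n = (1/2)Σ_{i=1}^N h_i((u_i^{n+1}-u_i^n)/Δt)² + (1/2)Σ_{i=0}^N α_{i+1/2}(u_{i+1}^{n+1}-u_i^{n+1})(u_{i+1}^n-u_i^n). Then E^{n+1} = E^n for all n≥1. -/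
open Finset

lemma key_telescope (N : ℕ) (a b : ℕ → ℝ) (ha : a 0 = 0) (hb : b N = 0) :
    ∑ i ∈ Finset.range (N+1), b i * (a (i+1) - a i)
      + ∑ i ∈ Finset.range N, a (i+1) * (b (i+1) - b i) = 0 := by
  have h1 : ∑ i ∈ Finset.range (N+1), b i * (a (i+1) - a i)
      = ∑ i ∈ Finset.range (N+1), b i * a (i+1)
        - ∑ i ∈ Finset.range (N+1), b i * a i := by
    rw [← Finset.sum_sub_distrib]; exact Finset.sum_congr rfl fun i _ => by ring
  have h2 : ∑ i ∈ Finset.range (N+1), b i * a (i+1)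
      = ∑ i ∈ Finset.range N, b i * a (i+1) := by
    rw [Finset.sum_range_succ, hb]; ring
  have h3 : ∑ i ∈ Finset.range (N+1), b i * a i
      = ∑ i ∈ Finset.range N, b (i+1) * a (i+1) := by
    rw [Finset.sum_range_succ', ha]; ring
  have h4 : ∑ i ∈ Finset.range N, a (i+1) * (b (i+1) - b i)
      = ∑ i ∈ Finset.range N, b (i+1) * a (i+1)
        - ∑ i ∈ Finset.range N, b i * a (i+1) := by
    rw [← Finset.sum_sub_distrib]; exact Finset.sum_congr rfl fun i _ => by ring
  rw [h1, h2, h3, h4]; ring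

/-- Discrete energy conservation for the finite-volume discretization of the
free wave equation on a uniform mesh (Dirichlet at `x = 0`, Neumann at `x = ℓ`
encoded by `α_{N+1/2} = 0`);  `α i` stands for `α_{i+1/2}`, `i = 0..N`. -/
theorem stmt_13 (N : ℕ) (hN : 2 ≤ N) (Δt Δx : ℝ) (hΔt : 0 < Δt) (hΔx : 0 < Δx)
    (α : ℕ → ℝ)
    (hα0 : α 0 = 2 / Δx)
    (hαmid : ∀ i : ℕ, 1 ≤ i → i ≤ N - 1 → α i = 1 / Δx)
    (hαN : α N = 0)
    (u : ℕ → ℕ → ℝ)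
    (hDir : ∀ n : ℕ, u 0 n = 0)
    (hscheme : ∀ n : ℕ, 1 ≤ n → ∀ i : ℕ, 1 ≤ i → i ≤ N →
      Δx * (u i (n+1) - 2 * u i n + u i (n-1)) / Δt^2
        - (α i * (u (i+1) n - u i n) - α (i-1) * (u i n - u (i-1) n)) = 0)
    (E : ℕ → ℝ)
    (hE : ∀ n : ℕ, E n =
      (1/2) * ∑ i ∈ Finset.Icc 1 N, Δx * ((u i (n+1) - u i n) / Δt)^2
      + (1/2) * ∑ i ∈ Finset.range (N+1),
          α i * (u (i+1) (n+1) - u i (n+1)) * (u (i+1) n - u i n)) :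
    ∀ n : ℕ, 1 ≤ n → E (n+1) = E n := by
  intro n hn
  have hΔt' : Δt ≠ 0 := ne_of_gt hΔt
  set a : ℕ → ℝ := fun i => u i (n+2) - u i n with hadef
  set b : ℕ → ℝ := fun i => α i * (u (i+1) (n+1) - u i (n+1)) with hbdef
  -- kinetic energy difference, termwise
  have hkin : ∀ i ∈ Finset.Icc 1 N,
      Δx * ((u i (n+1+1) - u i (n+1)) / Δt)^2
        - Δx * ((u i (n+1) - u i n) / Δt)^2
      = a i * (b i - b (i-1)) := by
    intro i hi
    rw [Finset.mem_Icc] at hi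
    have hsch := hscheme (n+1) (by omega) i hi.1 hi.2
    simp only [Nat.add_sub_cancel] at hsch
    have hi1 : i - 1 + 1 = i := by omega
    have hD : α i * (u (i+1) (n+1) - u i (n+1))
        - α (i-1) * (u i (n+1) - u (i-1) (n+1))
        = Δx * (u i (n+1+1) - 2 * u i (n+1) + u i n) / Δt^2 := by
      linarith [hsch]
    simp only [hadef, hbdef, hi1]
    rw [hD]
    have : (n+2 : ℕ) = n+1+1 := rfl
    rw [this]
    field_simp
    ring
  -- potential energy difference, termwise
  have hpot : ∀ i ∈ Finset.range (N+1),
      α i * (u (i+1) (n+1+1) - u i (n+1+1)) * (u (i+1) (n+1) - u i (n+1))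
        - α i * (u (i+1) (n+1) - u i (n+1)) * (u (i+1) n - u i n)
      = b i * (a (i+1) - a i) := by
    intro i _
    simp only [hadef, hbdef]
    have : (n+2 : ℕ) = n+1+1 := rfl
    rw [this]
    ring
  have ha0 : a 0 = 0 := by simp [hadef, hDir]
  have hbN : b N = 0 := by simp [hbdef, hαN]
  have htel := key_telescope N a b ha0 hbN
  -- sums of differences
  have hS1 : ∑ i ∈ Finset.Icc 1 N, Δx * ((u i (n+1+1) - u i (n+1)) / Δt)^2
      - ∑ i ∈ Finset.Icc 1 N, Δx * ((u i (n+1) - u i n) / Δt)^2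
      = ∑ i ∈ Finset.range N, a (i+1) * (b (i+1) - b i) := by
    rw [← Finset.sum_sub_distrib, Finset.sum_congr rfl hkin]
    refine Finset.sum_nbij' (fun i => i - 1) (fun i => i + 1) ?_ ?_ ?_ ?_ ?_
    · intro i hi; simp only [Finset.mem_Icc] at hi; simp only [Finset.mem_range]; omega
    · intro i hi; simp only [Finset.mem_range] at hi; simp only [Finset.mem_Icc]; omega
    · intro i hi; simp only [Finset.mem_Icc] at hi; omega
    · intro i _; omega
    · intro i hi
      rw [Finset.mem_Icc] at hi
      have h1 : i - 1 + 1 = i := by omega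
      rw [h1]
  have hS2 : ∑ i ∈ Finset.range (N+1),
        α i * (u (i+1) (n+1+1) - u i (n+1+1)) * (u (i+1) (n+1) - u i (n+1))
      - ∑ i ∈ Finset.range (N+1),
        α i * (u (i+1) (n+1) - u i (n+1)) * (u (i+1) n - u i n)
      = ∑ i ∈ Finset.range (N+1), b i * (a (i+1) - a i) := by
    rw [← Finset.sum_sub_distrib, Finset.sum_congr rfl hpot]
  rw [hE (n+1), hE n]
  linarith [htel, hS1, hS2]
end

section
/- Let H be a Hilbert space, A self-adjoint positive on H, c > 0, and suppose sequences (u_n) ⊂ D(A), (v_n) ⊂ D(A^{1/2}), (λ_n) ⊂ ℂ with Re λ_n = c, satisfy f_n := λ_n u_n - v_n → 0 in D(A^{1/2}) and g_n := λ_n v_n + A u_n + w_n → 0 in H where w_n → 0 in H, and (‖A^{1/2}u_n‖ + ‖v_n‖) is bounded. Then c(‖v_n‖² + ‖A^{1/2}u_n‖²) = Re[(g_n - w_n, v_n)_H + (A^{1/2}u_n, A^{1/2}f_n)_H], and consequently u_n → 0 in D(A^{1/2}) and v_n → 0 in H. -/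
open Filter

/-- Central computation in the resolvent-bound lemma: with `S = A^{1/2}`
(so `⟨Ax, y⟩ = ⟨Sx, Sy⟩`), `Re λ_n = c > 0`,
`f_n = λ_n u_n - v_n → 0` in `D(A^{1/2})`, `g_n = λ_n v_n + A u_n + w_n → 0`
in `H`, `w_n → 0`, and `(‖S u_n‖ + ‖v_n‖)` bounded, the stated identity holds
and `u_n → 0` in `D(A^{1/2})`, `v_n → 0` in `H`. -/
theorem stmt_17 {H : Type*} [NormedAddCommGroup H] [InnerProductSpace ℂ H]
    (A S : H →ₗ[ℂ] H)
    (hAS : ∀ x y : H, (inner ℂ (A x) y : ℂ) = inner ℂ (S x) (S y))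
    (c : ℝ) (hc : 0 < c) (lam : ℕ → ℂ) (hlam : ∀ n, (lam n).re = c)
    (u v w : ℕ → H)
    (hf : Tendsto (fun n => ‖S (lam n • u n - v n)‖) atTop (nhds 0))
    (hg : Tendsto (fun n => ‖lam n • v n + A (u n) + w n‖) atTop (nhds 0))
    (hw : Tendsto (fun n => ‖w n‖) atTop (nhds 0))
    (hbdd : ∃ M : ℝ, ∀ n, ‖S (u n)‖ + ‖v n‖ ≤ M) :
    (∀ n : ℕ, c * (‖v n‖^2 + ‖S (u n)‖^2)
        = (inner ℂ (v n) (lam n • v n + A (u n)) : ℂ).re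
          + (inner ℂ (S (lam n • u n - v n)) (S (u n)) : ℂ).re) ∧
    Tendsto (fun n => ‖S (u n)‖) atTop (nhds 0) ∧
    Tendsto (fun n => ‖v n‖) atTop (nhds 0) := by
  have hre : ∀ x y : H, (inner ℂ x y : ℂ).re ≤ ‖x‖ * ‖y‖ := fun x y => by
    have := re_inner_le_norm (𝕜 := ℂ) x y
    simpa [RCLike.re_to_complex] using this
  have key : ∀ n : ℕ, c * (‖v n‖^2 + ‖S (u n)‖^2)
        = (inner ℂ (v n) (lam n • v n + A (u n)) : ℂ).re
          + (inner ℂ (S (lam n • u n - v n)) (S (u n)) : ℂ).re := by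
    intro n
    have h1 : (inner ℂ (v n) (lam n • v n + A (u n)) : ℂ)
        = lam n * (‖v n‖^2 : ℂ) + inner ℂ (v n) (A (u n)) := by
      rw [inner_add_right, inner_smul_right, inner_self_eq_norm_sq_to_K]
      norm_cast
    have h2 : (inner ℂ (S (lam n • u n - v n)) (S (u n)) : ℂ)
        = (starRingEnd ℂ) (lam n) * (‖S (u n)‖^2 : ℂ)
          - inner ℂ (S (v n)) (S (u n)) := by
      rw [map_sub, map_smul, inner_sub_left, inner_smul_left,
        inner_self_eq_norm_sq_to_K]
      norm_cast
    have h3 : (inner ℂ (v n) (A (u n)) : ℂ).re = (inner ℂ (S (v n)) (S (u n)) : ℂ).re := by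
      rw [← inner_conj_symm (v n) (A (u n)), hAS]
      simp [inner_conj_symm]
    rw [h1, h2]
    simp only [Complex.add_re, Complex.sub_re, Complex.mul_re, Complex.conj_re,
      Complex.conj_im, hlam]
    simp only [← Complex.ofReal_pow, Complex.ofReal_re, Complex.ofReal_im,
      mul_zero, sub_zero, add_zero, h3]
    ring
  refine ⟨key, ?_⟩
  obtain ⟨M, hM⟩ := hbdd
  have hM0 : 0 ≤ M := le_trans (by positivity) (hM 0)
  have hbound : ∀ n : ℕ, ‖v n‖^2 + ‖S (u n)‖^2
      ≤ (M / c) * (‖lam n • v n + A (u n) + w n‖ + ‖w n‖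
          + ‖S (lam n • u n - v n)‖) := by
    intro n
    have h1 : (inner ℂ (v n) (lam n • v n + A (u n)) : ℂ).re
        ≤ ‖v n‖ * (‖lam n • v n + A (u n) + w n‖ + ‖w n‖) := by
      calc (inner ℂ (v n) (lam n • v n + A (u n)) : ℂ).re
          ≤ ‖v n‖ * ‖lam n • v n + A (u n)‖ := hre _ _
        _ ≤ ‖v n‖ * (‖lam n • v n + A (u n) + w n‖ + ‖w n‖) := by
            gcongr
            calc ‖lam n • v n + A (u n)‖
                = ‖(lam n • v n + A (u n) + w n) - w n‖ := by abel_nf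
              _ ≤ ‖lam n • v n + A (u n) + w n‖ + ‖w n‖ := norm_sub_le _ _
    have h2 : (inner ℂ (S (lam n • u n - v n)) (S (u n)) : ℂ).re
        ≤ ‖S (lam n • u n - v n)‖ * ‖S (u n)‖ := hre _ _
    have hvM : ‖v n‖ ≤ M := le_trans (le_add_of_nonneg_left (norm_nonneg _)) (hM n)
    have hsM : ‖S (u n)‖ ≤ M := le_trans (le_add_of_nonneg_right (norm_nonneg _)) (hM n)
    have := key n
    rw [div_mul_eq_mul_div, le_div_iff₀ hc, mul_comm _ c, this]
    calc (inner ℂ (v n) (lam n • v n + A (u n)) : ℂ).re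
          + (inner ℂ (S (lam n • u n - v n)) (S (u n)) : ℂ).re
        ≤ ‖v n‖ * (‖lam n • v n + A (u n) + w n‖ + ‖w n‖)
          + ‖S (lam n • u n - v n)‖ * ‖S (u n)‖ := add_le_add h1 h2
      _ ≤ M * (‖lam n • v n + A (u n) + w n‖ + ‖w n‖)
          + ‖S (lam n • u n - v n)‖ * M := by
            gcongr <;> positivity
      _ = M * (‖lam n • v n + A (u n) + w n‖ + ‖w n‖ + ‖S (lam n • u n - v n)‖) := by
            ring
  have hlim : Tendsto (fun n => ‖v n‖^2 + ‖S (u n)‖^2) atTop (nhds 0) := by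
    have hR : Tendsto (fun n => (M / c) * (‖lam n • v n + A (u n) + w n‖ + ‖w n‖
          + ‖S (lam n • u n - v n)‖)) atTop (nhds 0) := by
      have := (((hg.add hw).add hf).const_mul (M / c))
      simpa using this
    exact squeeze_zero (fun n => by positivity) hbound hR
  have hSu : Tendsto (fun n => ‖S (u n)‖^2) atTop (nhds 0) :=
    squeeze_zero (fun n => by positivity)
      (fun n => le_add_of_nonneg_left (by positivity)) hlim
  have hv : Tendsto (fun n => ‖v n‖^2) atTop (nhds 0) :=
    squeeze_zero (fun n => by positivity)
      (fun n => le_add_of_nonneg_right (by positivity)) hlim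
  constructor
  · have := hSu.sqrt
    simpa [Real.sqrt_sq (norm_nonneg _)] using this
  · have := hv.sqrt
    simpa [Real.sqrt_sq (norm_nonneg _)] using this
end
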